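/- arXiv:1408.1862 — 2 statements merged into one kernel-verified Lean document; each statement's English description precedes it below -/
import Mathlib

section
/- Let a = (a_1,…,a_p) and b = (b_1,…,b_q) be convergent words in {0,1} (i.e. each begins with 1 and ends with 0). For every subset S ⊆ {1,…,p+q} with |S| = p, let c_S ∈ {0,1}^{p+q} be the word obtained by placing the letters of a, in order, at the positions of S and the letters of b, in order, at the positions of the complement of S. Then every c_S is convergent and I(a)·I(b) = Σ_{S ⊆ {1,…,p+q}, |S| = p} I(c_S). (This is the shuffle product formula for iterated integrals.) -/
open MeasureTheory

/-- The open simplex 0 < t₁ < ⋯ < t_w < 1. -/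
def openSimplex (w : ℕ) : Set (Fin w → ℝ) :=
  {t | (∀ i, 0 < t i ∧ t i < 1) ∧ ∀ i j : Fin w, i < j → t i < t j}

/-- The iterated integral `I(a)` attached to a word `a` of length `w` in the letters `{0,1}`
(given as a function `ℕ → ℕ`, only the values `a 0, …, a (w-1)` being relevant), where the
letter `1` contributes the form `dt/(1-t)` and the letter `0` the form `dt/t`. -/
noncomputable def wordIntegral (w : ℕ) (a : ℕ → ℕ) : ℝ :=
  ∫ t in openSimplex w, ∏ i : Fin w, (if a i = 1 then (1 - t i)⁻¹ else (t i)⁻¹)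

/-- The shuffle `c_S` of the words `a` (of length `p`) and `b` (of length `q`) along a subset
`S` of the positions `{0, …, p+q-1}`: the letters of `a` are placed in order at the positions
of `S` and the letters of `b` in order at the positions of the complement of `S`. -/
def shuffleWord (p q : ℕ) (a b : ℕ → ℕ) (S : Finset (Fin (p + q))) : ℕ → ℕ := fun k =>
  if hk : k < p + q then
    if (⟨k, hk⟩ : Fin (p + q)) ∈ S then
      a ((S.filter (fun j : Fin (p + q) => (j : ℕ) < k)).card)
    else
      b ((Sᶜ.filter (fun j : Fin (p + q) => (j : ℕ) < k)).card)
  else 0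

/-!
Interleaving the coordinates of `(s, t) ∈ Δ_p × Δ_q` along a subset `S` of size `p` is a
volume-preserving isomorphism onto `ℝ^(p+q)`, under which `∏ f_{a_i}(s_i) ∏ f_{b_j}(t_j)` becomes
the integrand of the shuffle `c_S`. Off the null set where some `s_i = t_j`, a point of
`Δ_p × Δ_q` lands in `Δ_(p+q)` for exactly one `S`, namely the set of positions of the `s_i` in
the sorted list of all coordinates, so Fubini splits `I(a) I(b)` into the sum of the `I(c_S)`.

All these integrals converge. For a convergent word the letters `0` avoid the first position,
where `t` is smallest, and the letters `1` avoid the last, where `1 - t` is smallest; comparing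
with the geometric mean bounds the integrand by `∏ t_i^(-c) (1 - t_i)^(-c)` with
`c = (w - 1) / w < 1`, a product of Beta integrands.
-/

open Finset

theorem Finset.card_filter_lt_orderEmbOfFin {α : Type*} [LinearOrder α] {n : ℕ} (S : Finset α)
    (h : S.card = n) (i : Fin n) : (S.filter (· < S.orderEmbOfFin h i)).card = i := by
  have hfilter :
      S.filter (· < S.orderEmbOfFin h i) = (Iio i).map (S.orderEmbOfFin h).toEmbedding := by
    ext x
    simp only [mem_filter, mem_map, mem_Iio, RelEmbedding.coe_toEmbedding]
    constructor
    · rintro ⟨hx, hlt⟩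
      obtain ⟨j, rfl⟩ : x ∈ Set.range (S.orderEmbOfFin h) := by
        rwa [range_orderEmbOfFin]
      exact ⟨j, (S.orderEmbOfFin h).lt_iff_lt.mp hlt, rfl⟩
    · rintro ⟨j, hj, rfl⟩
      exact ⟨orderEmbOfFin_mem S h j, (S.orderEmbOfFin h).lt_iff_lt.mpr hj⟩
  rw [hfilter, card_map, Fin.card_Iio]

section ShuffleWord

variable {p q : ℕ} (a b : ℕ → ℕ) (S : Finset (Fin (p + q)))

theorem shuffleWord_of_mem {k : Fin (p + q)} (hk : k ∈ S) :
    shuffleWord p q a b S k = a (S.filter (· < k)).card := by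
  simp [shuffleWord, hk]

theorem shuffleWord_of_notMem {k : Fin (p + q)} (hk : k ∉ S) :
    shuffleWord p q a b S k = b (Sᶜ.filter (· < k)).card := by
  simp [shuffleWord, hk]

theorem shuffleWord_zero (hn : 0 < p + q) :
    shuffleWord p q a b S 0 = if (⟨0, hn⟩ : Fin (p + q)) ∈ S then a 0 else b 0 := by
  simp [shuffleWord, hn]

theorem shuffleWord_last (hn : 0 < p + q) (hS : S.card = p) :
    shuffleWord p q a b S (p + q - 1) =
      if (⟨p + q - 1, by omega⟩ : Fin (p + q)) ∈ S then a (p - 1) else b (q - 1) := by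
  set last : Fin (p + q) := ⟨p + q - 1, by omega⟩
  have filter_lt_last (T : Finset (Fin (p + q))) : T.filter (· < last) = T.erase last := by
    ext j
    simp only [mem_filter, mem_erase, Fin.lt_def, ne_eq, Fin.ext_iff, last]
    rw [and_comm]
    exact and_congr_left fun _ => by omega
  split_ifs with h
  · rw [show p + q - 1 = (last : ℕ) from rfl, shuffleWord_of_mem a b S h, filter_lt_last,
      card_erase_of_mem h, hS]
  · rw [show p + q - 1 = (last : ℕ) from rfl, shuffleWord_of_notMem a b S h, filter_lt_last,
      card_erase_of_mem (mem_compl.2 h), card_compl, hS, Fintype.card_fin, Nat.add_sub_cancel_left]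

theorem shuffleWord_convergent (hp : 0 < p) (hq : 0 < q) (hS : S.card = p) (ha₁ : a 0 = 1)
    (ha₀ : a (p - 1) = 0) (hb₁ : b 0 = 1) (hb₀ : b (q - 1) = 0) :
    shuffleWord p q a b S 0 = 1 ∧ shuffleWord p q a b S (p + q - 1) = 0 := by
  rw [shuffleWord_zero a b S (by omega), shuffleWord_last a b S (by omega) hS]
  constructor <;> split_ifs <;> assumption

end ShuffleWord

section Merge

variable {p q : ℕ} (S : Finset (Fin (p + q))) (hS : S.card = p)

include hS in
theorem card_compl_of_card_eq : Sᶜ.card = q := by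
  rw [card_compl, hS, Fintype.card_fin, Nat.add_sub_cancel_left]

noncomputable def mergeEquiv : Fin p ⊕ Fin q ≃ Fin (p + q) :=
  (Equiv.sumCongr (S.orderIsoOfFin hS).toEquiv
      ((Sᶜ.orderIsoOfFin (card_compl_of_card_eq S hS)).toEquiv.trans
        (Equiv.subtypeEquivRight fun _ => mem_compl))).trans
    (Equiv.sumCompl (· ∈ S))

@[simp]
theorem mergeEquiv_inl (i : Fin p) : mergeEquiv S hS (.inl i) = S.orderEmbOfFin hS i := rfl

@[simp]
theorem mergeEquiv_inr (j : Fin q) :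
    mergeEquiv S hS (.inr j) = Sᶜ.orderEmbOfFin (card_compl_of_card_eq S hS) j := rfl

theorem shuffleWord_mergeEquiv (a b : ℕ → ℕ) (z : Fin p ⊕ Fin q) :
    shuffleWord p q a b S (mergeEquiv S hS z) =
      Sum.elim (fun i : Fin p => a i) (fun j : Fin q => b j) z := by
  rcases z with i | j
  · rw [mergeEquiv_inl, shuffleWord_of_mem a b S (orderEmbOfFin_mem S hS i),
      card_filter_lt_orderEmbOfFin, Sum.elim_inl]
  · rw [mergeEquiv_inr, shuffleWord_of_notMem a b S (mem_compl.1 (orderEmbOfFin_mem _ _ j)),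
      card_filter_lt_orderEmbOfFin, Sum.elim_inr]

noncomputable def mergeMap : (Fin p → ℝ) × (Fin q → ℝ) ≃ᵐ (Fin (p + q) → ℝ) :=
  (MeasurableEquiv.sumPiEquivProdPi fun _ => ℝ).symm.trans
    (MeasurableEquiv.piCongrLeft (fun _ => ℝ) (mergeEquiv S hS))

theorem mergeMap_mergeEquiv (x : (Fin p → ℝ) × (Fin q → ℝ)) (z : Fin p ⊕ Fin q) :
    mergeMap S hS x (mergeEquiv S hS z) = Sum.elim x.1 x.2 z := by
  simp only [mergeMap, MeasurableEquiv.trans_apply, MeasurableEquiv.coe_piCongrLeft,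
    Equiv.piCongrLeft_apply_apply]
  rcases z with i | j <;> rfl

@[simp]
theorem mergeMap_orderEmbOfFin (x : (Fin p → ℝ) × (Fin q → ℝ)) (i : Fin p) :
    mergeMap S hS x (S.orderEmbOfFin hS i) = x.1 i :=
  mergeMap_mergeEquiv S hS x (.inl i)

@[simp]
theorem mergeMap_orderEmbOfFin_compl (x : (Fin p → ℝ) × (Fin q → ℝ)) (j : Fin q) :
    mergeMap S hS x (Sᶜ.orderEmbOfFin (card_compl_of_card_eq S hS) j) = x.2 j :=
  mergeMap_mergeEquiv S hS x (.inr j)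

theorem measurePreserving_mergeMap : MeasurePreserving (mergeMap S hS) :=
  (volume_measurePreserving_sumPiEquivProdPi_symm _).trans
    (volume_measurePreserving_piCongrLeft _ (mergeEquiv S hS))

theorem range_mergeMap (x : (Fin p → ℝ) × (Fin q → ℝ)) :
    Set.range (mergeMap S hS x) = Set.range x.1 ∪ Set.range x.2 := by
  rw [← (mergeEquiv S hS).surjective.range_comp, ← Set.Sum.elim_range]
  congr 1
  funext z
  exact mergeMap_mergeEquiv S hS x z

theorem mergeMap_comp_orderEmbOfFin (y : Fin (p + q) → ℝ) :
    mergeMap S hS (y ∘ S.orderEmbOfFin hS, y ∘ Sᶜ.orderEmbOfFin (card_compl_of_card_eq S hS)) =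
      y := by
  funext k
  obtain ⟨z, rfl⟩ := (mergeEquiv S hS).surjective k
  rcases z with i | j <;> simp

end Merge

theorem mem_openSimplex_iff {w : ℕ} {t : Fin w → ℝ} :
    t ∈ openSimplex w ↔ StrictMono t ∧ ∀ i, t i ∈ Set.Ioo 0 1 := by
  simp only [openSimplex, Set.mem_ofPred_eq, Set.mem_Ioo, StrictMono]
  exact and_comm

theorem measurableSet_openSimplex (w : ℕ) : MeasurableSet (openSimplex w) := by
  simp only [openSimplex, Set.ofPred_and, Set.ofPred_forall]
  refine .inter (.iInter fun i => .inter ?_ ?_)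
    (.iInter fun i => .iInter fun j => .iInter fun _ => ?_)
  all_goals exact measurableSet_lt (by fun_prop) (by fun_prop)

theorem comp_mem_openSimplex {m n : ℕ} {t : Fin n → ℝ} (ht : t ∈ openSimplex n)
    {f : Fin m → Fin n} (hf : StrictMono f) : t ∘ f ∈ openSimplex m := by
  rw [mem_openSimplex_iff] at ht ⊢
  exact ⟨ht.1.comp hf, fun i => ht.2 (f i)⟩

section Region

variable {p q : ℕ}

def shuffleRegion (S : Finset (Fin (p + q))) (hS : S.card = p) :
    Set ((Fin p → ℝ) × (Fin q → ℝ)) :=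
  mergeMap S hS ⁻¹' openSimplex (p + q)

theorem measurableSet_shuffleRegion (S : Finset (Fin (p + q))) (hS : S.card = p) :
    MeasurableSet (shuffleRegion S hS) :=
  (mergeMap S hS).measurable (measurableSet_openSimplex _)

theorem shuffleRegion_subset (S : Finset (Fin (p + q))) (hS : S.card = p) :
    shuffleRegion S hS ⊆ openSimplex p ×ˢ openSimplex q := by
  intro x hx
  have h₁ : x.1 = mergeMap S hS x ∘ S.orderEmbOfFin hS :=
    funext fun i => (mergeMap_orderEmbOfFin S hS x i).symm
  have h₂ : x.2 = mergeMap S hS x ∘ Sᶜ.orderEmbOfFin (card_compl_of_card_eq S hS) :=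
    funext fun j => (mergeMap_orderEmbOfFin_compl S hS x j).symm
  exact ⟨h₁ ▸ comp_mem_openSimplex hx (OrderEmbedding.strictMono _),
    h₂ ▸ comp_mem_openSimplex hx (OrderEmbedding.strictMono _)⟩

variable (p q) in
def collisionSet : Set ((Fin p → ℝ) × (Fin q → ℝ)) := {x | ∃ i j, x.1 i = x.2 j}

theorem volume_collisionSet : volume (collisionSet p q) = 0 := by
  have : collisionSet p q = ⋃ i, ⋃ j, {x : (Fin p → ℝ) × (Fin q → ℝ) | x.1 i = x.2 j} := by
    ext x; simp [collisionSet]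
  rw [this]
  refine measure_iUnion_null fun i => measure_iUnion_null fun j => ?_
  rw [Measure.volume_eq_prod,
    Measure.measure_prod_null (measurableSet_eq_fun (by fun_prop) (by fun_prop))]
  refine Filter.Eventually.of_forall fun s => ?_
  have : Prod.mk s ⁻¹' {x : (Fin p → ℝ) × (Fin q → ℝ) | x.1 i = x.2 j} = {t | t j = s i} := by
    ext t; exact eq_comm
  simpa [this, volume_pi] using
    Measure.pi_hyperplane (fun _ : Fin q => (volume : Measure ℝ)) j (s i)

theorem mem_iff_mergeMap_mem_range (S : Finset (Fin (p + q))) (hS : S.card = p)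
    {x : (Fin p → ℝ) × (Fin q → ℝ)} (hx : x ∉ collisionSet p q) (k : Fin (p + q)) :
    k ∈ S ↔ mergeMap S hS x k ∈ Set.range x.1 := by
  obtain ⟨i | j, rfl⟩ := (mergeEquiv S hS).surjective k
  · simp
  · simp only [mergeEquiv_inr, mergeMap_orderEmbOfFin_compl,
      mem_compl.1 (orderEmbOfFin_mem _ _ j), false_iff, Set.mem_range, not_exists]
    exact fun i hi => hx ⟨i, j, hi⟩

theorem eq_of_mem_shuffleRegion {S S' : Finset (Fin (p + q))} (hS : S.card = p)
    (hS' : S'.card = p) {x : (Fin p → ℝ) × (Fin q → ℝ)} (hx : x ∈ shuffleRegion S hS)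
    (hx' : x ∈ shuffleRegion S' hS') (hxc : x ∉ collisionSet p q) : S = S' := by
  have hmerge : mergeMap S hS x = mergeMap S' hS' x :=
    ((mem_openSimplex_iff.1 hx).1.range_inj (mem_openSimplex_iff.1 hx').1).1
      (by rw [range_mergeMap, range_mergeMap])
  ext k
  rw [mem_iff_mergeMap_mem_range S hS hxc, mem_iff_mergeMap_mem_range S' hS' hxc, hmerge]

theorem exists_strictMono_mergeMap {x : (Fin p → ℝ) × (Fin q → ℝ)} (hmono₁ : StrictMono x.1)
    (hmono₂ : StrictMono x.2) (hdisj : Disjoint (Set.range x.1) (Set.range x.2)) :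
    ∃ S hS, StrictMono (mergeMap S hS x) := by
  classical
  set T := univ.image x.1 ∪ univ.image x.2
  have hT : T.card = p + q := by
    rw [card_union_of_disjoint (by simpa [← disjoint_coe] using hdisj),
      card_image_of_injective _ hmono₁.injective, card_image_of_injective _ hmono₂.injective,
      card_univ, card_univ, Fintype.card_fin, Fintype.card_fin]
  set v := T.orderEmbOfFin hT
  have hv : Set.range v = Set.range x.1 ∪ Set.range x.2 := by simp [v, T]
  set S := univ.filter fun k => v k ∈ Set.range x.1
  have hvS : v '' S = Set.range x.1 := by
    rw [show (S : Set (Fin (p + q))) = v ⁻¹' Set.range x.1 by ext; simp [S],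
      Set.image_preimage_eq_inter_range, hv, Set.inter_eq_left.2 Set.subset_union_left]
  have hS : S.card = p := by
    have : S.image v = univ.image x.1 := coe_injective (by simpa using hvS)
    rw [← card_image_of_injective S v.injective, this, card_image_of_injective _ hmono₁.injective,
      card_univ, Fintype.card_fin]
  have hx₁ : v ∘ S.orderEmbOfFin hS = x.1 := by
    refine ((v.strictMono.comp (OrderEmbedding.strictMono _)).range_inj hmono₁).1 ?_
    rw [Set.range_comp, range_orderEmbOfFin, hvS]
  have hx₂ : v ∘ Sᶜ.orderEmbOfFin (card_compl_of_card_eq S hS) = x.2 := by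
    refine ((v.strictMono.comp (OrderEmbedding.strictMono _)).range_inj hmono₂).1 ?_
    rw [Set.range_comp, range_orderEmbOfFin, coe_compl,
      Set.image_compl_eq_range_sdiff_image v.injective, hvS, hv, Set.union_sdiff_left,
      hdisj.symm.sdiff_eq_left]
  have hmerge : mergeMap S hS x = v := by
    rw [← Prod.mk.eta (p := x), ← hx₁, ← hx₂, mergeMap_comp_orderEmbOfFin]
  exact ⟨S, hS, hmerge ▸ v.strictMono⟩

theorem exists_mem_shuffleRegion {x : (Fin p → ℝ) × (Fin q → ℝ)}
    (hx : x ∈ openSimplex p ×ˢ openSimplex q) (hxc : x ∉ collisionSet p q) :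
    ∃ S hS, x ∈ shuffleRegion S hS := by
  obtain ⟨⟨hmono₁, hI₁⟩, hmono₂, hI₂⟩ :=
    And.intro (mem_openSimplex_iff.1 hx.1) (mem_openSimplex_iff.1 hx.2)
  have hdisj : Disjoint (Set.range x.1) (Set.range x.2) := by
    rw [Set.disjoint_left]
    rintro _ ⟨i, rfl⟩ ⟨j, hj⟩
    exact hxc ⟨i, j, hj.symm⟩
  obtain ⟨S, hS, hmono⟩ := exists_strictMono_mergeMap hmono₁ hmono₂ hdisj
  refine ⟨S, hS, mem_openSimplex_iff.2 ⟨hmono, fun k => ?_⟩⟩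
  obtain ⟨i, hi⟩ | ⟨j, hj⟩ := (range_mergeMap S hS x).le ⟨k, rfl⟩
  · exact hi ▸ hI₁ i
  · exact hj ▸ hI₂ j

theorem iUnion_shuffleRegion_subset :
    (⋃ S : {S : Finset (Fin (p + q)) // S.card = p}, shuffleRegion S.1 S.2) ⊆
      openSimplex p ×ˢ openSimplex q :=
  Set.iUnion_subset fun S => shuffleRegion_subset S.1 S.2

theorem iUnion_shuffleRegion_ae_eq :
    (⋃ S : {S : Finset (Fin (p + q)) // S.card = p}, shuffleRegion S.1 S.2) =ᵐ[volume]
      openSimplex p ×ˢ openSimplex q := by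
  refine ae_eq_set.2 ⟨?_, measure_mono_null ?_ volume_collisionSet⟩
  · rw [Set.sdiff_eq_empty.2 iUnion_shuffleRegion_subset, measure_empty]
  · rintro x ⟨hx, hxU⟩
    by_contra hxc
    obtain ⟨S, hS, hxS⟩ := exists_mem_shuffleRegion hx hxc
    exact hxU (Set.mem_iUnion.2 ⟨⟨S, hS⟩, hxS⟩)

theorem pairwise_aedisjoint_shuffleRegion :
    ∀ S S' : {S : Finset (Fin (p + q)) // S.card = p}, S ≠ S' →
      AEDisjoint volume (shuffleRegion S.1 S.2) (shuffleRegion S'.1 S'.2) := by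
  intro S S' hne
  refine measure_mono_null (fun x ⟨hx, hx'⟩ => ?_) volume_collisionSet
  by_contra hxc
  exact hne (Subtype.ext (eq_of_mem_shuffleRegion S.2 S'.2 hx hx' hxc))

theorem setIntegral_openSimplex_prod_eq_sum {f : (Fin p → ℝ) × (Fin q → ℝ) → ℝ}
    (hf : IntegrableOn f (openSimplex p ×ˢ openSimplex q)) :
    ∫ x in openSimplex p ×ˢ openSimplex q, f x =
      ∑ S : {S : Finset (Fin (p + q)) // S.card = p}, ∫ x in shuffleRegion S.1 S.2, f x := by
  rw [← setIntegral_congr_set iUnion_shuffleRegion_ae_eq,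
    integral_iUnion_ae (s := fun S : {S : Finset (Fin (p + q)) // S.card = p} =>
        shuffleRegion S.1 S.2)
      (fun S => (measurableSet_shuffleRegion S.1 S.2).nullMeasurableSet)
      pairwise_aedisjoint_shuffleRegion (hf.mono_set iUnion_shuffleRegion_subset),
    tsum_fintype]

end Region

theorem integrableOn_rpow_neg_mul_one_sub_rpow_neg {c : ℝ} (hc : c < 1) :
    IntegrableOn (fun y : ℝ => y ^ (-c) * (1 - y) ^ (-c)) (Set.Ioo 0 1) := by
  have hβ := Complex.betaIntegral_convergent (u := ((1 - c : ℝ) : ℂ)) (v := ((1 - c : ℝ) : ℂ))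
    (by simpa using hc) (by simpa using hc)
  rw [intervalIntegrable_iff_integrableOn_Ioo_of_le zero_le_one] at hβ
  refine IntegrableOn.congr_fun hβ.norm (fun y ⟨hy₀, hy₁⟩ => ?_) measurableSet_Ioo
  have hexp : ((1 - c : ℝ) : ℂ) - 1 = ((-c : ℝ) : ℂ) := by push_cast; ring
  rw [hexp, ← Complex.ofReal_cpow hy₀.le, ← Complex.ofReal_one, ← Complex.ofReal_sub,
    ← Complex.ofReal_cpow (by linarith), ← Complex.ofReal_mul, Complex.norm_real,
    Real.norm_of_nonneg (by positivity)]

theorem prod_inv_le_prod_rpow_neg {ι : Type*} [Fintype ι] {u : ι → ℝ} (hu₀ : ∀ i, 0 < u i)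
    (hu₁ : ∀ i, u i ≤ 1) {s : Finset ι} {i₀ : ι} (hi₀ : i₀ ∉ s) (hmin : ∀ i ∈ s, u i₀ ≤ u i) :
    ∏ i ∈ s, (u i)⁻¹ ≤ ∏ i, u i ^ (-((Fintype.card ι - 1) / Fintype.card ι : ℝ)) := by
  classical
  set n := Fintype.card ι
  have hn : 0 < n := Fintype.card_pos_iff.2 ⟨i₀⟩
  set A := ∏ i, u i
  set B := ∏ i ∈ s, u i
  have hA₀ : 0 < A := prod_pos fun i _ => hu₀ i
  have hB₀ : 0 < B := prod_pos fun i _ => hu₀ i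
  have hAB : A ≤ u i₀ * B := by
    simp only [A, B]
    rw [← prod_mul_prod_compl s, mul_comm, ← mul_prod_erase sᶜ u (mem_compl.2 hi₀)]
    gcongr
    exact mul_le_of_le_one_right (hu₀ i₀).le
      (prod_le_one (fun i _ => (hu₀ i).le) fun i _ => hu₁ i)
  have hB : u i₀ ^ (n - 1) ≤ B := by
    have hs : s.card ≤ n - 1 := by
      have := card_le_card (fun i hi => mem_erase.2 ⟨ne_of_mem_of_not_mem hi hi₀, mem_univ i⟩ :
        s ⊆ univ.erase i₀)
      rwa [card_erase_of_mem (mem_univ _), card_univ] at this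
    calc u i₀ ^ (n - 1) ≤ u i₀ ^ s.card := pow_le_pow_of_le_one (hu₀ i₀).le (hu₁ i₀) hs
      _ = ∏ _i ∈ s, u i₀ := (prod_const _).symm
      _ ≤ B := prod_le_prod (fun _ _ => (hu₀ i₀).le) hmin
  have hpow : A ^ (n - 1) ≤ B ^ n :=
    calc A ^ (n - 1) ≤ (u i₀ * B) ^ (n - 1) := pow_le_pow_left₀ hA₀.le hAB _
      _ = u i₀ ^ (n - 1) * B ^ (n - 1) := mul_pow _ _ _
      _ ≤ B * B ^ (n - 1) := by gcongr
      _ = B ^ n := by rw [← pow_succ', Nat.sub_add_cancel hn]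
  have hrpow : A ^ ((n - 1) / n : ℝ) ≤ B := by
    rw [← pow_le_pow_iff_left₀ (by positivity) hB₀.le hn.ne', ← Real.rpow_natCast,
      ← Real.rpow_mul hA₀.le, div_mul_cancel₀ _ (by positivity), ← Nat.cast_pred hn,
      Real.rpow_natCast]
    exact hpow
  rw [Real.finsetProd_rpow _ _ fun i _ => (hu₀ i).le, Real.rpow_neg hA₀.le, prod_inv_distrib]
  exact inv_anti₀ (by positivity) hrpow

noncomputable def wordIntegrand (w : ℕ) (a : ℕ → ℕ) (t : Fin w → ℝ) : ℝ :=
  ∏ i : Fin w, (if a i = 1 then (1 - t i)⁻¹ else (t i)⁻¹)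

theorem measurable_wordIntegrand (w : ℕ) (a : ℕ → ℕ) : Measurable (wordIntegrand w a) :=
  Finset.measurable_prod _ fun i _ => by split_ifs <;> fun_prop

theorem wordIntegrand_nonneg {w : ℕ} (a : ℕ → ℕ) {t : Fin w → ℝ} (ht : t ∈ openSimplex w) :
    0 ≤ wordIntegrand w a t := by
  refine prod_nonneg fun i _ => ?_
  have := (mem_openSimplex_iff.1 ht).2 i
  split_ifs <;> exact inv_nonneg.2 (by linarith [this.1, this.2])

theorem wordIntegrand_le {w : ℕ} {a : ℕ → ℕ} (hw : 0 < w) (h₁ : a 0 = 1) (h₀ : a (w - 1) = 0)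
    {t : Fin w → ℝ} (ht : t ∈ openSimplex w) :
    wordIntegrand w a t ≤ ∏ i, t i ^ (-((w - 1) / w : ℝ)) * (1 - t i) ^ (-((w - 1) / w : ℝ)) := by
  classical
  obtain ⟨hmono, hI⟩ := mem_openSimplex_iff.1 ht
  have hones := prod_inv_le_prod_rpow_neg (u := fun i => 1 - t i) (s := univ.filter (a · = 1))
    (i₀ := ⟨w - 1, by omega⟩) (fun i => by linarith [(hI i).2]) (fun i => by linarith [(hI i).1])
    (by simp [h₀]) fun i _ => by
      linarith [hmono.monotone (Fin.le_def.2 (Nat.le_sub_one_of_lt i.isLt) : i ≤ ⟨w - 1, by omega⟩)]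
  have hzeros := prod_inv_le_prod_rpow_neg (u := t) (s := univ.filter (a · ≠ 1))
    (i₀ := ⟨0, hw⟩) (fun i => (hI i).1) (fun i => (hI i).2.le)
    (by simp [h₁]) fun i _ => hmono.monotone (Fin.le_def.2 (Nat.zero_le _))
  rw [Fintype.card_fin] at hones hzeros
  rw [wordIntegrand, prod_ite, prod_mul_distrib, mul_comm (∏ i, t i ^ _)]
  exact mul_le_mul hones hzeros (prod_nonneg fun i _ => inv_nonneg.2 (hI i).1.le)
    (prod_nonneg fun i _ => Real.rpow_nonneg (by linarith [(hI i).2]) _)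

theorem integrableOn_wordIntegrand {w : ℕ} {a : ℕ → ℕ} (hw : 0 < w) (h₁ : a 0 = 1)
    (h₀ : a (w - 1) = 0) : IntegrableOn (wordIntegrand w a) (openSimplex w) := by
  set c : ℝ := (w - 1) / w
  have hc : c < 1 := by
    rw [div_lt_one (by exact_mod_cast hw)]
    linarith
  set g := (Set.Ioo (0 : ℝ) 1).indicator fun y => y ^ (-c) * (1 - y) ^ (-c)
  have hg : Integrable fun t : Fin w → ℝ => ∏ i, g (t i) :=
    Integrable.fintype_prod fun _ =>
      (integrableOn_rpow_neg_mul_one_sub_rpow_neg hc).integrable_indicator measurableSet_Ioo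
  refine hg.integrableOn.mono' (measurable_wordIntegrand w a).aestronglyMeasurable
    ((ae_restrict_iff' (measurableSet_openSimplex w)).2 (.of_forall fun t ht => ?_))
  rw [Real.norm_of_nonneg (wordIntegrand_nonneg a ht)]
  convert wordIntegrand_le hw h₁ h₀ ht using 2 with i
  exact Set.indicator_of_mem ((mem_openSimplex_iff.1 ht).2 i) _

section Transport

variable {p q : ℕ}

theorem wordIntegrand_shuffleWord_mergeMap (a b : ℕ → ℕ) (S : Finset (Fin (p + q)))
    (hS : S.card = p) (x : (Fin p → ℝ) × (Fin q → ℝ)) :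
    wordIntegrand (p + q) (shuffleWord p q a b S) (mergeMap S hS x) =
      wordIntegrand p a x.1 * wordIntegrand q b x.2 := by
  rw [wordIntegrand, ← (mergeEquiv S hS).prod_comp, Fintype.prod_sum_type]
  simp only [shuffleWord_mergeEquiv, mergeMap_mergeEquiv, Sum.elim_inl, Sum.elim_inr]
  rfl

theorem setIntegral_shuffleRegion (a b : ℕ → ℕ) (S : Finset (Fin (p + q))) (hS : S.card = p) :
    ∫ x in shuffleRegion S hS, wordIntegrand p a x.1 * wordIntegrand q b x.2 =
      wordIntegral (p + q) (shuffleWord p q a b S) := by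
  simp_rw [shuffleRegion, ← wordIntegrand_shuffleWord_mergeMap a b S hS]
  exact (measurePreserving_mergeMap S hS).setIntegral_preimage_emb
    (MeasurableEquiv.measurableEmbedding _) _ _

end Transport

theorem stmt4_general (p q : ℕ) (hp : 0 < p) (hq : 0 < q) (a b : ℕ → ℕ)
    (ha1 : a 0 = 1) (ha0 : a (p - 1) = 0) (hb1 : b 0 = 1) (hb0 : b (q - 1) = 0) :
    (∀ S : Finset (Fin (p + q)), S.card = p →
      shuffleWord p q a b S 0 = 1 ∧ shuffleWord p q a b S (p + q - 1) = 0) ∧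
    wordIntegral p a * wordIntegral q b =
      ∑ S ∈ Finset.univ.filter (fun S : Finset (Fin (p + q)) => S.card = p),
        wordIntegral (p + q) (shuffleWord p q a b S) := by
  refine ⟨fun S hS => shuffleWord_convergent a b S hp hq hS ha1 ha0 hb1 hb0, ?_⟩
  have hprod : IntegrableOn (fun x : (Fin p → ℝ) × (Fin q → ℝ) =>
      wordIntegrand p a x.1 * wordIntegrand q b x.2) (openSimplex p ×ˢ openSimplex q) := by
    rw [IntegrableOn, Measure.volume_eq_prod, ← Measure.prod_restrict]
    exact (integrableOn_wordIntegrand hp ha1 ha0).mul_prod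
      (integrableOn_wordIntegrand hq hb1 hb0)
  calc wordIntegral p a * wordIntegral q b
      = ∫ x in openSimplex p ×ˢ openSimplex q, wordIntegrand p a x.1 * wordIntegrand q b x.2 := by
        rw [Measure.volume_eq_prod, setIntegral_prod_mul]
        rfl
    _ = ∑ S : {S : Finset (Fin (p + q)) // S.card = p},
          wordIntegral (p + q) (shuffleWord p q a b S) := by
        rw [setIntegral_openSimplex_prod_eq_sum hprod]
        exact Fintype.sum_congr _ _ fun S => setIntegral_shuffleRegion a b S.1 S.2
    _ = _ := (sum_subtype _ (fun S => mem_filter_univ S)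
          fun S => wordIntegral (p + q) (shuffleWord p q a b S)).symm

/-- The shuffle product formula for iterated integrals: for convergent words `a`, `b` of
lengths `p`, `q`, every shuffle `c_S` is convergent and `I(a)·I(b) = Σ_{|S|=p} I(c_S)`. -/
theorem stmt4 (p q : ℕ) (hp : 0 < p) (hq : 0 < q) (a b : ℕ → ℕ)
    (hav : ∀ i < p, a i = 0 ∨ a i = 1) (hbv : ∀ i < q, b i = 0 ∨ b i = 1)
    (ha1 : a 0 = 1) (ha0 : a (p - 1) = 0) (hb1 : b 0 = 1) (hb0 : b (q - 1) = 0) :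
    (∀ S : Finset (Fin (p + q)), S.card = p →
      shuffleWord p q a b S 0 = 1 ∧ shuffleWord p q a b S (p + q - 1) = 0) ∧
    wordIntegral p a * wordIntegral q b =
      ∑ S ∈ Finset.univ.filter (fun S : Finset (Fin (p + q)) => S.card = p),
        wordIntegral (p + q) (shuffleWord p q a b S) :=
  stmt4_general p q hp hq a b ha1 ha0 hb1 hb0
end

section
/- Fix a real z with 0 < z < 1 and define, for real ε in a neighbourhood of 0, G(ε) = Σ_{k≥0} ( (2)_k (1+ε)_k (1+ε)_k / ((3+ε)_k (2+ε)_k k!) ) z^k. Then, as ε → 0, G(ε) − [ (2/z²)((1−z)·log(1−z) + z) + ε·(1/z²)( 7(1−z)·log(1−z) + 5z + (2−4z)·Li_2(z) ) + ε²·(1/z²)( 9(1−z)·log(1−z) + (7−12z)·Li_2(z) + (6z−2)·Li_3(z) + 4z ) ] = O(ε³). -/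
/-!
The Pochhammer quotients telescope: the `k`-th coefficient of `G(ε)` is the rational function
`(1+ε)²(2+ε) n / ((n+ε)²(n+1+ε))` of `n = k + 1`. Its Taylor polynomial of order two in `ε`,
written in partial fractions in `n`, has coefficients `Σ a_s / n^s + b_s / (n+1)^s` whose series
against `z^k` are combinations of `log (1 - z)`, `Li₂ z` and `Li₃ z`. The Taylor remainder is
`ε³` times a rational function of `n` of degree `-2`, hence at most `C |ε|³` uniformly in `n`,
and summing it against the geometric series `z^k` gives the `O(ε³)`.
-/

open Asymptotics

/-- The polylogarithm `Li_s(z) = Σ_{k ≥ 1} z^k / k^s`. -/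
noncomputable def Li (s : ℕ) (z : ℝ) : ℝ := ∑' k : ℕ, z ^ (k + 1) / ((k : ℝ) + 1) ^ s

open Polynomial Filter

theorem isBigO_tsum_sub_of_norm_sub_le {α ι E F : Type*} [NormedAddCommGroup E] [CompleteSpace E]
    [Norm F] {l : Filter α} {t q : α → ι → E} {Q : α → E} {g : α → F} {b : ι → ℝ}
    (hb : Summable b) (hq : ∀ᶠ a in l, HasSum (q a) (Q a))
    (htq : ∀ᶠ a in l, ∀ i, ‖t a i - q a i‖ ≤ ‖g a‖ * b i) :
    (fun a => ∑' i, t a i - Q a) =O[l] g := by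
  refine isBigO_iff.2 ⟨∑' i, b i, ?_⟩
  filter_upwards [hq, htq] with a hqa hta
  have hsum : Summable fun i => t a i - q a i := .of_norm_bounded (hb.mul_left ‖g a‖) hta
  have ht : HasSum (t a) (∑' i, (t a i - q a i) + Q a) := by
    simpa using hsum.hasSum.add hqa
  rw [ht.tsum_eq, add_sub_cancel_right, mul_comm]
  exact tsum_of_norm_bounded (hb.hasSum.mul_left ‖g a‖) hta

section Polylog

variable {z : ℝ}

theorem hasSum_Li (hz : |z| < 1) (s : ℕ) :
    HasSum (fun k : ℕ => z ^ (k + 1) / ((k : ℝ) + 1) ^ s) (Li s z) := by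
  refine (Summable.of_norm_bounded (g := fun k : ℕ => |z| ^ (k + 1)) ?_ fun k => ?_).hasSum
  · exact (summable_nat_add_iff 1).2 (summable_geometric_of_lt_one (abs_nonneg z) hz)
  · simp only [norm_div, norm_pow, Real.norm_eq_abs]
    exact div_le_self (by positivity)
      (one_le_pow₀ ((le_add_of_nonneg_left k.cast_nonneg).trans (le_abs_self _)))

theorem Li_one (hz : |z| < 1) : Li 1 z = -Real.log (1 - z) := by
  have h : HasSum (fun k : ℕ => z ^ (k + 1) / ((k : ℝ) + 1)) (Li 1 z) := by
    simpa using hasSum_Li hz 1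
  exact h.unique (Real.hasSum_pow_div_log_of_abs_lt_one hz)

theorem hasSum_pow_div_add_one_pow (hz : |z| < 1) (hz0 : z ≠ 0) (s : ℕ) :
    HasSum (fun k : ℕ => z ^ k / ((k : ℝ) + 1) ^ s) (Li s z / z) :=
  ((hasSum_Li hz s).div_const z).congr_fun fun k => by
    rw [pow_succ, mul_div_right_comm, mul_div_cancel_right₀ _ hz0]

theorem hasSum_pow_div_add_two_pow (hz : |z| < 1) (hz0 : z ≠ 0) (s : ℕ) :
    HasSum (fun k : ℕ => z ^ k / ((k : ℝ) + 2) ^ s) ((Li s z - z) / z ^ 2) := by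
  have h := (hasSum_nat_add_iff' 1).2 (hasSum_Li hz s)
  simp only [Finset.sum_range_one, Nat.cast_zero, zero_add, one_pow, div_one, pow_one] at h
  refine (h.div_const (z ^ 2)).congr_fun fun k => ?_
  rw [Nat.cast_succ, add_assoc, one_add_one_eq_two, add_assoc, one_add_one_eq_two, pow_add,
    mul_div_right_comm, mul_div_cancel_right₀ _ (pow_ne_zero 2 hz0)]

end Polylog

theorem ascPochhammer_eval_mul_add_natCast {S : Type*} [CommSemiring S] (k : ℕ) (a : S) :
    (ascPochhammer S k).eval a * (a + k) = a * (ascPochhammer S k).eval (a + 1) := by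
  rw [← ascPochhammer_succ_eval, ascPochhammer_succ_left, eval_mul, eval_comp]
  simp

theorem ascPochhammer_eval_eq_mul_eval_add_one_div {K : Type*} [Field K] [LinearOrder K]
    [IsStrictOrderedRing K] {k : ℕ} {a : K} (ha : 0 < a) :
    (ascPochhammer K k).eval a = a * (ascPochhammer K k).eval (a + 1) / (a + k) := by
  rw [← ascPochhammer_eval_mul_add_natCast, mul_div_cancel_right₀]
  exact (add_pos_of_pos_of_nonneg ha k.cast_nonneg).ne'

theorem ascPochhammer_eval_two {S : Type*} [Semiring S] (k : ℕ) :
    (ascPochhammer S k).eval 2 = ((k + 1).factorial : S) := by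
  simpa [one_add_one_eq_two, add_comm] using factorial_mul_ascPochhammer S 1 k

noncomputable def hypCoeff (ε x : ℝ) : ℝ :=
  (1 + ε) ^ 2 * (2 + ε) * x / ((x + ε) ^ 2 * (x + 1 + ε))

noncomputable def hypCoeffTaylor (ε x : ℝ) : ℝ :=
  (2 / x - 2 / (x + 1)) + ε * (7 / x - 4 / x ^ 2 - 7 / (x + 1) + 2 / (x + 1) ^ 2) +
    ε ^ 2 * (9 / x - 12 / x ^ 2 + 6 / x ^ 3 - 9 / (x + 1) + 7 / (x + 1) ^ 2 - 2 / (x + 1) ^ 3)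

def hypCoeffRemNum (ε x : ℝ) : ℝ :=
  (x ^ 7 - 9 * x ^ 6 + x ^ 5 + 23 * x ^ 4 + 7 * x ^ 3 - 15 * x ^ 2 - 8 * x) +
    ε * (-12 * x ^ 5 + 12 * x ^ 4 + 30 * x ^ 3 - 4 * x ^ 2 - 20 * x - 6) +
    ε ^ 2 * (-4 * x ^ 4 + 7 * x ^ 3 + 9 * x ^ 2 - 6 * x - 6)

theorem hypergeom_coeff_eq_hypCoeff (k : ℕ) {ε : ℝ} (hε : -1 < ε) :
    (ascPochhammer ℝ k).eval 2 * (ascPochhammer ℝ k).eval (1 + ε) *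
        (ascPochhammer ℝ k).eval (1 + ε) /
      ((ascPochhammer ℝ k).eval (3 + ε) * (ascPochhammer ℝ k).eval (2 + ε) *
        (k.factorial : ℝ)) =
      hypCoeff ε (k + 1) := by
  have h1 : (ascPochhammer ℝ k).eval (1 + ε) =
      (1 + ε) * (ascPochhammer ℝ k).eval (2 + ε) / ((k : ℝ) + 1 + ε) := by
    rw [ascPochhammer_eval_eq_mul_eval_add_one_div (by linarith)]; ring_nf
  have h2 : (ascPochhammer ℝ k).eval (2 + ε) =
      (2 + ε) * (ascPochhammer ℝ k).eval (3 + ε) / ((k : ℝ) + 1 + 1 + ε) := by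
    rw [ascPochhammer_eval_eq_mul_eval_add_one_div (by linarith)]; ring_nf
  have h3 : (ascPochhammer ℝ k).eval (3 + ε) ≠ 0 := (ascPochhammer_pos k _ (by linarith)).ne'
  have : (0 : ℝ) < k + 1 + ε := by linarith [k.cast_nonneg (α := ℝ)]
  have : (0 : ℝ) < k + 1 + 1 + ε := by linarith
  rw [h1, h2, ascPochhammer_eval_two, Nat.factorial_succ, hypCoeff]
  push_cast
  field_simp

theorem hypCoeff_sub_hypCoeffTaylor {ε x : ℝ} (hx : x ≠ 0) (hx1 : x + 1 ≠ 0)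
    (hxε : x + ε ≠ 0) (hx1ε : x + 1 + ε ≠ 0) :
    hypCoeff ε x - hypCoeffTaylor ε x =
      ε ^ 3 * hypCoeffRemNum ε x / (x ^ 3 * (x + 1) ^ 3 * (x + ε) ^ 2 * (x + 1 + ε)) := by
  rw [hypCoeff, hypCoeffTaylor, hypCoeffRemNum]
  field_simp
  ring

theorem abs_add_mul_add_sq_mul_le {ε a b c : ℝ} (hε : |ε| ≤ 1) :
    |a + ε * b + ε ^ 2 * c| ≤ |a| + |b| + |c| := by
  have hb : |ε * b| ≤ |b| := by
    rw [abs_mul]; exact mul_le_of_le_one_left (abs_nonneg b) hε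
  have hc : |ε ^ 2 * c| ≤ |c| := by
    rw [abs_mul, abs_pow]
    exact mul_le_of_le_one_left (abs_nonneg c) (pow_le_one₀ (abs_nonneg ε) hε)
  linarith [abs_add_three a (ε * b) (ε ^ 2 * c)]

theorem abs_hypCoeffRemNum_le {ε x : ℝ} (hx : 1 ≤ x) (hε : |ε| ≤ 1) :
    |hypCoeffRemNum ε x| ≤ 180 * x ^ 7 := by
  have hx0 : 0 ≤ x := by linarith
  obtain ⟨h0, h1, h2, h3, h4, h5, h6⟩ : 1 ≤ x ^ 7 ∧ x ≤ x ^ 7 ∧ x ^ 2 ≤ x ^ 7 ∧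
      x ^ 3 ≤ x ^ 7 ∧ x ^ 4 ≤ x ^ 7 ∧ x ^ 5 ≤ x ^ 7 ∧ x ^ 6 ≤ x ^ 7 :=
    ⟨one_le_pow₀ hx, le_self_pow₀ hx (by norm_num), pow_le_pow_right₀ hx (by norm_num),
      pow_le_pow_right₀ hx (by norm_num), pow_le_pow_right₀ hx (by norm_num),
      pow_le_pow_right₀ hx (by norm_num), pow_le_pow_right₀ hx (by norm_num)⟩
  have := pow_nonneg hx0 2; have := pow_nonneg hx0 3; have := pow_nonneg hx0 4
  have := pow_nonneg hx0 5; have := pow_nonneg hx0 6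
  refine (abs_add_mul_add_sq_mul_le hε).trans <| (add_le_add_three (d := 64 * x ^ 7)
    (e := 84 * x ^ 7) (f := 32 * x ^ 7) ?_ ?_ ?_).trans_eq (by ring) <;>
  exact abs_le.2 ⟨by linarith, by linarith⟩

theorem abs_hypCoeff_sub_hypCoeffTaylor_le {ε x : ℝ} (hx : 1 ≤ x) (hε : |ε| ≤ 1 / 2) :
    |hypCoeff ε x - hypCoeffTaylor ε x| ≤ 1440 * |ε| ^ 3 := by
  obtain ⟨hε₁, hε₂⟩ := abs_le.1 hε
  have hD : x ^ 7 / 8 ≤ x ^ 3 * (x + 1) ^ 3 * (x + ε) ^ 2 * (x + 1 + ε) :=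
    calc x ^ 7 / 8 ≤ x ^ 8 / 8 := by gcongr; norm_num
      _ = x ^ 3 * x ^ 3 * (x / 2) ^ 2 * (1 / 2) := by ring
      _ ≤ x ^ 3 * (x + 1) ^ 3 * (x + ε) ^ 2 * (x + 1 + ε) := by gcongr <;> linarith
  have hD0 : 0 < x ^ 3 * (x + 1) ^ 3 * (x + ε) ^ 2 * (x + 1 + ε) :=
    lt_of_lt_of_le (by positivity) hD
  rw [hypCoeff_sub_hypCoeffTaylor (by positivity) (by positivity) (by linarith) (by linarith),
    abs_div, abs_mul, abs_pow, abs_of_pos hD0, div_le_iff₀ hD0]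
  calc |ε| ^ 3 * |hypCoeffRemNum ε x| ≤ |ε| ^ 3 * (180 * x ^ 7) := by
        gcongr; exact abs_hypCoeffRemNum_le hx (by linarith)
    _ = 1440 * |ε| ^ 3 * (x ^ 7 / 8) := by ring
    _ ≤ 1440 * |ε| ^ 3 * (x ^ 3 * (x + 1) ^ 3 * (x + ε) ^ 2 * (x + 1 + ε)) := by gcongr

theorem hasSum_hypCoeffTaylor_mul_pow {z : ℝ} (hz : |z| < 1) (hz0 : z ≠ 0) (ε : ℝ) :
    HasSum (fun k : ℕ => hypCoeffTaylor ε (k + 1) * z ^ k)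
      ((2 / z ^ 2) * ((1 - z) * Real.log (1 - z) + z) +
        ε * (1 / z ^ 2) * (7 * (1 - z) * Real.log (1 - z) + 5 * z + (2 - 4 * z) * Li 2 z) +
        ε ^ 2 * (1 / z ^ 2) *
          (9 * (1 - z) * Real.log (1 - z) + (7 - 12 * z) * Li 2 z + (6 * z - 2) * Li 3 z +
            4 * z)) := by
  have u := hasSum_pow_div_add_one_pow hz hz0
  have v := hasSum_pow_div_add_two_pow hz hz0
  have h := (((((u 1).sub (v 1)).mul_left (2 + 7 * ε + 9 * ε ^ 2)).sub
    ((u 2).mul_left (4 * ε + 12 * ε ^ 2))).add ((u 3).mul_left (6 * ε ^ 2))).add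
    (((v 2).mul_left (2 * ε + 7 * ε ^ 2)).sub ((v 3).mul_left (2 * ε ^ 2)))
  rw [Li_one hz] at h
  refine (congrArg (HasSum _) ?_).mp (h.congr_fun fun k => ?_)
  · field_simp
    ring
  · simp only [hypCoeffTaylor, pow_one]
    rw [show (k : ℝ) + 1 + 1 = k + 2 by ring]
    ring

/-- The ε-expansion of `G(ε) = ₃F₂(2, 1+ε, 1+ε; 3+ε, 2+ε; z)` up to order `ε²`:
`G(ε) = (2/z²)((1-z)log(1-z)+z) + ε(1/z²)(7(1-z)log(1-z)+5z+(2-4z)Li₂(z))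
  + ε²(1/z²)(9(1-z)log(1-z)+(7-12z)Li₂(z)+(6z-2)Li₃(z)+4z) + O(ε³)` as `ε → 0`. -/
theorem stmt18 (z : ℝ) (hz0 : 0 < z) (hz1 : z < 1) :
    (fun ε : ℝ =>
        (∑' k : ℕ,
          (ascPochhammer ℝ k).eval 2 * (ascPochhammer ℝ k).eval (1 + ε) *
              (ascPochhammer ℝ k).eval (1 + ε) /
            ((ascPochhammer ℝ k).eval (3 + ε) * (ascPochhammer ℝ k).eval (2 + ε) *
              (k.factorial : ℝ)) * z ^ k) -
        ((2 / z ^ 2) * ((1 - z) * Real.log (1 - z) + z) +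
          ε * (1 / z ^ 2) *
            (7 * (1 - z) * Real.log (1 - z) + 5 * z + (2 - 4 * z) * Li 2 z) +
          ε ^ 2 * (1 / z ^ 2) *
            (9 * (1 - z) * Real.log (1 - z) + (7 - 12 * z) * Li 2 z +
              (6 * z - 2) * Li 3 z + 4 * z)))
      =O[nhds 0] fun ε : ℝ => ε ^ 3 := by
  have hz : |z| < 1 := abs_lt.2 ⟨by linarith, hz1⟩
  have hsmall : ∀ᶠ ε : ℝ in nhds 0, |ε| ≤ 1 / 2 := by
    filter_upwards [Metric.closedBall_mem_nhds (0 : ℝ) (by norm_num : (0 : ℝ) < 1 / 2)]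
      with ε hε
    rwa [mem_closedBall_zero_iff, Real.norm_eq_abs] at hε
  refine isBigO_tsum_sub_of_norm_sub_le (q := fun ε (k : ℕ) => hypCoeffTaylor ε (k + 1) * z ^ k)
    (b := fun k : ℕ => 1440 * z ^ k) ((summable_geometric_of_lt_one hz0.le hz1).mul_left _)
    (.of_forall (hasSum_hypCoeffTaylor_mul_pow hz hz0.ne')) ?_
  filter_upwards [hsmall] with ε hε k
  have hk : (1 : ℝ) ≤ k + 1 := le_add_of_nonneg_left k.cast_nonneg
  rw [hypergeom_coeff_eq_hypCoeff k (by linarith [(abs_le.1 hε).1]), ← sub_mul, norm_mul,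
    norm_pow, Real.norm_of_nonneg hz0.le, norm_pow, Real.norm_eq_abs, ← mul_assoc,
    mul_comm _ 1440]
  exact mul_le_mul_of_nonneg_right (abs_hypCoeff_sub_hypCoeffTaylor_le hk hε) (by positivity)
end
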